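/- Let k ≥ 3, 0 ≤ b < k, and let H be a k-uniform hypergraph on m vertices (m ≥ 2k−b) containing no copy of Y_{k,b}. Then e(H) ≤ C(m,k)·(k−b)/(m−b). -/

import Mathlib

/-!
Double count the pairs `(e, S)` with `e` an edge and `S ⊆ e` a `b`-set: each edge contains
`C(k, b)` of them. For a fixed `b`-set `S`, the sets `e \ S` with `S ⊆ e ∈ E` form a
`(k - b)`-uniform family on the `m - b` vertices outside `S`; it is intersecting, because
`e \ S` and `f \ S` are disjoint exactly when `e ∩ f = S`. As `2 (k - b) ≤ m - b`, Erdős–Ko–Rado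
bounds it by `C(m - b - 1, k - b - 1)`, so
`e(H) C(k, b) ≤ C(m, b) C(m - b - 1, k - b - 1) = C(m, k) C(k, b) (k - b) / (m - b)`.
-/

open Finset Function

section ErdosKoRado

variable {α β : Type*}

theorem intersecting_map_iff [DecidableEq α] [DecidableEq β] (f : α ↪ β)
    {𝒜 : Finset (Finset α)} :
    ((𝒜.map (mapEmbedding f).toEmbedding : Finset (Finset β)) : Set (Finset β)).Intersecting ↔
      (𝒜 : Set (Finset α)).Intersecting := by
  simp [Set.Intersecting, disjoint_map]

theorem sized_map_iff (f : α ↪ β) {𝒜 : Finset (Finset α)} {r : ℕ} :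
    ((𝒜.map (mapEmbedding f).toEmbedding : Finset (Finset β)) : Set (Finset β)).Sized r ↔
      (𝒜 : Set (Finset α)).Sized r := by
  simp [Set.Sized]

theorem card_le_choose_of_intersecting [Fintype α] [DecidableEq α] {𝒜 : Finset (Finset α)}
    {r : ℕ} (h𝒜 : (𝒜 : Set (Finset α)).Intersecting) (hr : (𝒜 : Set (Finset α)).Sized r)
    (hα : 2 * r ≤ Fintype.card α) :
    #𝒜 ≤ (Fintype.card α - 1).choose (r - 1) := by
  simpa using erdos_ko_rado ((intersecting_map_iff (Fintype.equivFin α).toEmbedding).2 h𝒜)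
    ((sized_map_iff _).2 hr) (by omega)

theorem card_le_choose_of_intersecting_of_subset [DecidableEq α] {s : Finset α}
    {𝒜 : Finset (Finset α)} {r : ℕ} (h𝒜s : ∀ A ∈ 𝒜, A ⊆ s)
    (h𝒜 : (𝒜 : Set (Finset α)).Intersecting) (hr : (𝒜 : Set (Finset α)).Sized r)
    (hs : 2 * r ≤ #s) :
    #𝒜 ≤ (#s - 1).choose (r - 1) := by
  obtain ⟨ℬ, -, rfl⟩ : ∃ ℬ ⊆ (univ : Finset (Finset s)),
      𝒜 = ℬ.map (mapEmbedding (Embedding.subtype (· ∈ s))).toEmbedding :=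
    subset_map_iff.1 fun A hA ↦
      mem_map.2 ⟨A.subtype (· ∈ s), mem_univ _, subtype_map_of_mem (h𝒜s A hA)⟩
  simpa using card_le_choose_of_intersecting ((intersecting_map_iff _).1 h𝒜)
    ((sized_map_iff _).1 hr) (by simpa using hs)

end ErdosKoRado

section Link

variable {α : Type*} [DecidableEq α]

def link (E : Finset (Finset α)) (S : Finset α) : Finset (Finset α) :=
  {e ∈ E | S ⊆ e}.image (· \ S)

theorem card_link (E : Finset (Finset α)) (S : Finset α) :
    #(link E S) = #{e ∈ E | S ⊆ e} := by
  refine card_image_of_injOn fun e he f hf hef ↦ ?_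
  rw [← sdiff_union_of_subset (mem_filter.1 he).2, ← sdiff_union_of_subset (mem_filter.1 hf).2]
  exact congrArg (· ∪ S) hef

theorem disjoint_of_mem_link {E : Finset (Finset α)} {S A : Finset α} (hA : A ∈ link E S) :
    Disjoint A S := by
  obtain ⟨e, -, rfl⟩ := mem_image.1 hA
  exact sdiff_disjoint

theorem sized_link {E : Finset (Finset α)} {k : ℕ} (hE : (E : Set (Finset α)).Sized k)
    (S : Finset α) : (link E S : Set (Finset α)).Sized (k - #S) := by
  intro A hA
  obtain ⟨e, he, rfl⟩ := mem_image.1 hA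
  rw [card_sdiff_of_subset (mem_filter.1 he).2, hE (mem_filter.1 he).1]

theorem inter_eq_of_disjoint_sdiff {S e f : Finset α} (he : S ⊆ e) (hf : S ⊆ f)
    (hd : Disjoint (e \ S) (f \ S)) : e ∩ f = S := by
  refine Subset.antisymm (fun x hx ↦ ?_) (subset_inter he hf)
  by_contra hxS
  exact disjoint_left.1 hd (mem_sdiff.2 ⟨(mem_inter.1 hx).1, hxS⟩)
    (mem_sdiff.2 ⟨(mem_inter.1 hx).2, hxS⟩)

theorem intersecting_link {E : Finset (Finset α)} {k : ℕ} {S : Finset α}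
    (hE : (E : Set (Finset α)).Sized k) (hSk : #S < k)
    (hY : ∀ e ∈ E, ∀ f ∈ E, e ≠ f → #(e ∩ f) ≠ #S) :
    (link E S : Set (Finset α)).Intersecting := by
  simp only [Set.Intersecting, link, coe_image, Set.mem_image, mem_coe, mem_filter]
  rintro _ ⟨e, ⟨he, hSe⟩, rfl⟩ _ ⟨f, ⟨hf, hSf⟩, rfl⟩ hd
  obtain rfl | hef := eq_or_ne e f
  · have hcard := sized_link hE S (mem_image_of_mem _ (mem_filter.2 ⟨he, hSe⟩))
    rw [disjoint_self, bot_eq_empty] at hd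
    rw [hd, card_empty] at hcard
    omega
  · exact hY e he f hf hef (by rw [inter_eq_of_disjoint_sdiff hSe hSf hd])

variable [Fintype α]

theorem card_filter_superset_le_choose {E : Finset (Finset α)} {k : ℕ} {S : Finset α}
    (hE : (E : Set (Finset α)).Sized k) (hSk : #S < k) (hα : 2 * k - #S ≤ Fintype.card α)
    (hY : ∀ e ∈ E, ∀ f ∈ E, e ≠ f → #(e ∩ f) ≠ #S) :
    #{e ∈ E | S ⊆ e} ≤ (Fintype.card α - #S - 1).choose (k - #S - 1) := by
  rw [← card_link, ← card_compl]
  exact card_le_choose_of_intersecting_of_subset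
    (fun A hA ↦ subset_compl_iff_disjoint_right.2 (disjoint_of_mem_link hA))
    (intersecting_link hE hSk hY) (sized_link hE S) (by rw [card_compl]; omega)

theorem card_mul_choose_le {E : Finset (Finset α)} {k b : ℕ}
    (hE : (E : Set (Finset α)).Sized k) (hb : b < k) (hα : 2 * k - b ≤ Fintype.card α)
    (hY : ∀ e ∈ E, ∀ f ∈ E, e ≠ f → #(e ∩ f) ≠ b) :
    #E * k.choose b ≤
      (Fintype.card α).choose b * (Fintype.card α - b - 1).choose (k - b - 1) := by
  have := card_mul_le_card_mul (fun e S ↦ S ⊆ e) (s := E) (t := powersetCard b univ)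
    (m := k.choose b) (n := (Fintype.card α - b - 1).choose (k - b - 1)) ?_ ?_
  · simpa using this
  · intro e he
    have : (powersetCard b univ).bipartiteAbove (fun e S ↦ S ⊆ e) e = powersetCard b e := by
      ext S; simp [bipartiteAbove, mem_powersetCard, and_comm]
    rw [this, card_powersetCard, hE he]
  · intro S hS
    obtain rfl := (mem_powersetCard.1 hS).2
    exact card_filter_superset_le_choose hE hb hα hY

end Link

theorem choose_mul_choose_mul_sub {m k b : ℕ} (hbk : b < k) (hbm : b < m) :
    m.choose b * (m - b - 1).choose (k - b - 1) * (m - b) =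
      m.choose k * k.choose b * (k - b) := by
  rw [Nat.choose_mul hbk.le]
  obtain ⟨n, hn⟩ : ∃ n, m - b = n + 1 := ⟨m - b - 1, by omega⟩
  obtain ⟨r, hr⟩ : ∃ r, k - b = r + 1 := ⟨k - b - 1, by omega⟩
  rw [hn, hr, Nat.add_sub_cancel, Nat.add_sub_cancel, mul_assoc, mul_comm _ (n + 1),
    Nat.add_one_mul_choose_eq, mul_assoc]

theorem card_mul_sub_le_choose_mul_sub {α : Type*} [Fintype α] [DecidableEq α]
    {E : Finset (Finset α)} {k b : ℕ} (hE : (E : Set (Finset α)).Sized k) (hb : b < k)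
    (hα : 2 * k - b ≤ Fintype.card α) (hY : ∀ e ∈ E, ∀ f ∈ E, e ≠ f → #(e ∩ f) ≠ b) :
    #E * (Fintype.card α - b) ≤ (Fintype.card α).choose k * (k - b) := by
  have hchoose : 0 < k.choose b := Nat.choose_pos hb.le
  have hcount := Nat.mul_le_mul_right (Fintype.card α - b) (card_mul_choose_le hE hb hα hY)
  rw [choose_mul_choose_mul_sub hb (by omega)] at hcount
  nlinarith

theorem card_le_of_no_Ykb_general {V : Type*} [Fintype V] [DecidableEq V]
    (k b m : ℕ) (hb : b < k) (hm : 2 * k - b ≤ m)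
    (hV : Fintype.card V = m)
    (E : Finset (Finset V)) (hE : ∀ e ∈ E, e.card = k)
    (hY : ∀ e ∈ E, ∀ f ∈ E, e ≠ f → (e ∩ f).card ≠ b) :
    (E.card : ℝ) ≤ (m.choose k : ℝ) * ((k : ℝ) - b) / ((m : ℝ) - b) := by
  subst hV
  have hbm : b < Fintype.card V := by omega
  have hbound :
      ((#E * (Fintype.card V - b) : ℕ) : ℝ) ≤ ((Fintype.card V).choose k * (k - b) : ℕ) :=
    Nat.cast_le.2 (card_mul_sub_le_choose_mul_sub (fun e he ↦ hE e he) hb hm hY)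
  push_cast [Nat.cast_sub hbm.le, Nat.cast_sub hb.le] at hbound
  rwa [le_div_iff₀ (by rw [sub_pos]; exact_mod_cast hbm)]

/-- If `H` is a `k`-graph on `m ≥ 2k−b` vertices (`k ≥ 3`, `0 ≤ b < k`) containing no
copy of `Y_{k,b}` (two edges sharing exactly `b` vertices), then
`e(H) ≤ C(m,k)·(k−b)/(m−b)`. -/
theorem card_le_of_no_Ykb {V : Type*} [Fintype V] [DecidableEq V]
    (k b m : ℕ) (hk : 3 ≤ k) (hb : b < k) (hm : 2 * k - b ≤ m)
    (hV : Fintype.card V = m)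
    (E : Finset (Finset V)) (hE : ∀ e ∈ E, e.card = k)
    (hY : ∀ e ∈ E, ∀ f ∈ E, e ≠ f → (e ∩ f).card ≠ b) :
    (E.card : ℝ) ≤ (m.choose k : ℝ) * ((k : ℝ) - b) / ((m : ℝ) - b) :=
  card_le_of_no_Ykb_general k b m hb hm hV E hE hY
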